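/- Let ψ₁ be a Schwartz function on ℝ with 0 ≤ ψ₁ ≤ 1 and support a compact subset of (0,1), let ψ(y) = ψ₁(y) − ψ₁(−y), and let Ψ(x,ξ₁,ξ₂) = ψ(x)ψ(ξ₂)ψ(ξ₁−ξ₂). Let σ_BH(x,ξ₁,ξ₂) = −πi·sign(ξ₁−ξ₂). Then for every r > 1, σ_BH belongs to 𝓜^{(∞,1,r);(∞,∞,1)} with window Ψ; that is, ∫_ℝ sup_{ξ₁,ξ₂∈ℝ} (∫_ℝ (∫_ℝ sup_{x∈ℝ} |𝒱_Ψ σ_BH(x,t₁,t₂,ξ₁,ξ₂,ν)| dt₁)^{r} dt₂)^{1/r} dν < ∞. -/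

import Mathlib

/-!
The window Ψ(x, ξ₁, ξ₂) = ψ(x) ψ(ξ₂) ψ(ξ₁ - ξ₂) is adapted to σ_BH: after the shear
u = ξ̃₁ - ξ̃₂ the symbol STFT factors into three one-dimensional integrals, of moduli |ψ̂(ν)|,
|∫ sign(u) ψ(u - ξ₁ + ξ₂) e^{2πi t₁ u} du| and |ψ̂(-(t₁ + t₂))|. The signed integral is
O((1 + |t₁|)⁻¹) uniformly in ξ: it is bounded by ‖ψ‖₁, and integrating by parts on each half-line
gives O(|t₁|⁻¹). With the rapid decay of ψ̂, Peetre's inequality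
1 + |t₂| ≤ (1 + |t₁|)(1 + |t₁ + t₂|) makes the t₁-integral O((1 + |t₂|)⁻¹) uniformly in x, ξ₁, ξ₂,
and this lies in L^r exactly because r > 1; the remaining factor ψ̂(ν) is integrable.
-/

open MeasureTheory Complex
open scoped ENNReal NNReal

noncomputable section

/-- `e2pi a = e^{2πi a}`. -/
def e2pi (a : ℝ) : ℂ := Complex.exp (2 * Real.pi * Complex.I * (a : ℂ))

/-- Short-time Fourier transform on `ℝ`: `V_φ f (t, ν)`. -/
def STFT1 (φ f : ℝ → ℂ) (t ν : ℝ) : ℂ := ∫ y : ℝ, f y * e2pi (-(y * ν)) * φ (y - t)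

/-- The Gaussian window `e^{-x²}` on `ℝ`. -/
def gauss1 : ℝ → ℂ := fun x => (Real.exp (-x ^ 2) : ℝ)

/-- `L^p`-type norm (`ℝ≥0∞`-valued) with essential supremum in case `p = ∞`. -/
def eNorm {α : Type*} [MeasurableSpace α] (μ : Measure α) (p : ℝ≥0∞) (F : α → ℝ≥0∞) : ℝ≥0∞ :=
  if p = ∞ then essSup F μ else (∫⁻ a, F a ^ p.toReal ∂μ) ^ (1 / p.toReal)

/-- Modulation space norm `‖f‖_{M^{p,q}}` on `ℝ` with the Gaussian window. -/
def modNorm1 (p q : ℝ≥0∞) (f : ℝ → ℂ) : ℝ≥0∞ :=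
  eNorm volume q fun ν => eNorm volume p fun t => (‖STFT1 gauss1 f t ν‖₊ : ℝ≥0∞)

/-- Fourier transform on `ℝ`. -/
def FT1 (f : ℝ → ℂ) (ξ : ℝ) : ℂ := ∫ y : ℝ, f y * e2pi (-(y * ξ))

/-- Symbol short-time Fourier transform of a symbol on `ℝ³`. -/
def symbSTFT3 (Ψ σ : ℝ × ℝ × ℝ → ℂ) (x t₁ t₂ ξ₁ ξ₂ ν : ℝ) : ℂ :=
  ∫ X : ℝ × ℝ × ℝ, σ X * Ψ (X.1 - x, X.2.1 - ξ₁, X.2.2 - ξ₂) *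
    e2pi (-(X.1 * ν - t₁ * X.2.1 - t₂ * X.2.2))

/-- Symbol short-time Fourier transform of a symbol on `ℝ⁴`. -/
def symbSTFT4 (Ψ σ : ℝ × ℝ × ℝ × ℝ → ℂ) (x t₁ t₂ t₃ ξ₁ ξ₂ ξ₃ ν : ℝ) : ℂ :=
  ∫ X : ℝ × ℝ × ℝ × ℝ, σ X * Ψ (X.1 - x, X.2.1 - ξ₁, X.2.2.1 - ξ₂, X.2.2.2 - ξ₃) *
    e2pi (-(X.1 * ν - t₁ * X.2.1 - t₂ * X.2.2.1 - t₃ * X.2.2.2))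

/-- The bilinear Hilbert transform as an (absolutely convergent) bilinear Fourier
multiplier for Schwartz functions. -/
def BH (f g : ℝ → ℂ) (x : ℝ) : ℂ :=
  ∫ ξ : ℝ × ℝ, (-(Real.pi : ℂ) * Complex.I * (Real.sign (ξ.1 - ξ.2) : ℝ)) *
    FT1 f ξ.1 * FT1 g ξ.2 * e2pi (x * (ξ.1 + ξ.2))

/-- The trilinear Hilbert transform as an (absolutely convergent) trilinear Fourier
multiplier for Schwartz functions. -/
def TH (f g h : ℝ → ℂ) (x : ℝ) : ℂ :=
  ∫ ξ : ℝ × ℝ × ℝ, ((Real.pi : ℂ) * Complex.I * (Real.sign (ξ.1 - ξ.2.1 - 2 * ξ.2.2) : ℝ)) *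
    FT1 f ξ.1 * FT1 g ξ.2.1 * FT1 h ξ.2.2 * e2pi (x * (ξ.1 + ξ.2.1 + ξ.2.2))

open Set Filter Topology SchwartzMap FourierTransform

lemma e2pi_add (a b : ℝ) : e2pi (a + b) = e2pi a * e2pi b := by
  simp only [e2pi, ← Complex.exp_add]; push_cast; ring_nf

lemma norm_e2pi (a : ℝ) : ‖e2pi a‖ = 1 := by
  rw [e2pi, Complex.norm_exp]; simp

lemma continuous_e2pi : Continuous e2pi := by
  unfold e2pi; fun_prop

lemma MeasureTheory.Integrable.mul_e2pi {f : ℝ → ℂ} (hf : Integrable f) (t : ℝ) :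
    Integrable fun u => f u * e2pi (t * u) :=
  hf.mul_bdd (continuous_e2pi.comp (continuous_const_mul t)).aestronglyMeasurable
    (.of_forall fun _ => (norm_e2pi _).le)

lemma hasDerivAt_e2pi_mul (t u : ℝ) :
    HasDerivAt (fun u => e2pi (t * u)) (2 * Real.pi * Complex.I * t * e2pi (t * u)) u := by
  have h := ((hasDerivAt_id' u).ofReal_comp.const_mul (2 * Real.pi * Complex.I * t)).cexp
  simp only [e2pi]
  convert h using 1
  · ext v; push_cast; ring_nf
  · push_cast; ring_nf

lemma fourier_eq_integral_e2pi (f : ℝ → ℂ) (ν : ℝ) :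
    𝓕 f ν = ∫ v, f v * e2pi (-(v * ν)) := by
  rw [Real.fourier_real_eq_integral_exp_smul]
  congr 1 with v
  rw [smul_eq_mul, mul_comm, e2pi]
  push_cast; ring_nf

lemma norm_integral_comp_sub_mul_e2pi (f : ℝ → ℂ) (a s : ℝ) :
    ‖∫ y, f (y - a) * e2pi (s * y)‖ = ‖𝓕 f (-s)‖ := by
  rw [← integral_add_right_eq_self _ a, fourier_eq_integral_e2pi]
  simp only [add_sub_cancel_right, mul_add, e2pi_add, ← mul_assoc, integral_mul_const, norm_mul,
    norm_e2pi, mul_one, mul_neg, neg_neg, mul_comm _ s]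

lemma integral_comp_add_prod (G : ℝ × ℝ → ℂ) :
    ∫ p : ℝ × ℝ, G (p.1 + p.2, p.2) = ∫ p, G p := by
  let e : ℝ × ℝ ≃ᵐ ℝ × ℝ :=
    (MeasurableEquiv.prodComm.trans (MeasurableEquiv.shearSubRight ℝ)).trans
      MeasurableEquiv.prodComm
  -- `e p = (p.1 - p.2, p.2)`
  have he : MeasurePreserving e := measurePreserving_sub_prod volume volume
  rw [← he.integral_comp']
  congr 1 with p
  exact congrArg G (Prod.ext (sub_add_cancel p.1 p.2) rfl)

lemma symbSTFT3_eq_mul_mul (f g h s : ℝ → ℂ) (x t₁ t₂ ξ₁ ξ₂ ν : ℝ) :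
    symbSTFT3 (fun X => f X.1 * g X.2.2 * h (X.2.1 - X.2.2)) (fun X => s (X.2.1 - X.2.2))
        x t₁ t₂ ξ₁ ξ₂ ν =
      (∫ y, f (y - x) * e2pi (-ν * y)) *
        (∫ u, s u * h (u - (ξ₁ - ξ₂)) * e2pi (t₁ * u)) *
        ∫ v, g (v - ξ₂) * e2pi ((t₁ + t₂) * v) := by
  have hsplit : ∀ X : ℝ × ℝ × ℝ, s (X.2.1 - X.2.2) *
      (f (X.1 - x) * g (X.2.2 - ξ₂) * h (X.2.1 - ξ₁ - (X.2.2 - ξ₂))) *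
      e2pi (-(X.1 * ν - t₁ * X.2.1 - t₂ * X.2.2)) =
      (f (X.1 - x) * e2pi (-ν * X.1)) *
        (s (X.2.1 - X.2.2) * g (X.2.2 - ξ₂) * h (X.2.1 - X.2.2 - (ξ₁ - ξ₂)) *
          e2pi (t₁ * X.2.1 + t₂ * X.2.2)) := by
    intro X
    rw [show -(X.1 * ν - t₁ * X.2.1 - t₂ * X.2.2) = -ν * X.1 + (t₁ * X.2.1 + t₂ * X.2.2) by
      ring, e2pi_add, show X.2.1 - ξ₁ - (X.2.2 - ξ₂) = X.2.1 - X.2.2 - (ξ₁ - ξ₂) by ring]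
    ring
  have hshear : ∀ p : ℝ × ℝ, s (p.1 + p.2 - p.2) * g (p.2 - ξ₂) *
      h (p.1 + p.2 - p.2 - (ξ₁ - ξ₂)) * e2pi (t₁ * (p.1 + p.2) + t₂ * p.2) =
      (s p.1 * h (p.1 - (ξ₁ - ξ₂)) * e2pi (t₁ * p.1)) *
        (g (p.2 - ξ₂) * e2pi ((t₁ + t₂) * p.2)) := by
    intro p
    rw [add_sub_cancel_right, show t₁ * (p.1 + p.2) + t₂ * p.2 = t₁ * p.1 + (t₁ + t₂) * p.2 by
      ring, e2pi_add]
    ring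
  simp only [symbSTFT3, hsplit]
  rw [Measure.volume_eq_prod, integral_prod_mul (fun y => f (y - x) * e2pi (-ν * y))
    (fun p : ℝ × ℝ => s (p.1 - p.2) * g (p.2 - ξ₂) * h (p.1 - p.2 - (ξ₁ - ξ₂)) *
      e2pi (t₁ * p.1 + t₂ * p.2)), ← integral_comp_add_prod]
  simp only [hshear]
  rw [Measure.volume_eq_prod, integral_prod_mul (fun u => s u * h (u - (ξ₁ - ξ₂)) * e2pi (t₁ * u))
    (fun v => g (v - ξ₂) * e2pi ((t₁ + t₂) * v)), mul_assoc]

lemma integral_sign_mul_eq_sub (φ : ℝ → ℂ) (hφ : Integrable φ) :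
    ∫ u, (Real.sign u : ℂ) * φ u = (∫ u in Ioi 0, φ u) - ∫ u in Iic 0, φ u := by
  have hsplit : (fun u => (Real.sign u : ℂ) * φ u) = (Ioi 0).indicator φ - (Iio 0).indicator φ := by
    ext u
    rcases lt_trichotomy u 0 with hu | rfl | hu
    · simp [hu, Real.sign_of_neg, hu.not_gt]
    · simp
    · simp [hu, Real.sign_of_pos, hu.not_gt]
  rw [hsplit, integral_sub' (hφ.indicator measurableSet_Ioi) (hφ.indicator measurableSet_Iio),
    integral_indicator measurableSet_Ioi, integral_indicator measurableSet_Iio,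
    integral_Iic_eq_integral_Iio]

section HalfLine

variable {f f' : ℝ → ℂ}

lemma norm_setIntegral_Ioi_mul_e2pi_le (hf : ∀ u, HasDerivAt f (f' u) u) (hfi : Integrable f)
    (hf'i : Integrable f') (b t : ℝ) :
    2 * Real.pi * |t| * ‖∫ u in Ioi b, f u * e2pi (t * u)‖ ≤ ‖f b‖ + ∫ u, ‖f' u‖ := by
  set c : ℂ := 2 * Real.pi * Complex.I * t with hc_def
  have hderiv : ∀ u, HasDerivAt (fun u => f u * e2pi (t * u))
      (f' u * e2pi (t * u) + c * (f u * e2pi (t * u))) u := fun u =>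
    ((hf u).mul (hasDerivAt_e2pi_mul t u)).congr_deriv (by rw [hc_def]; ring)
  have hint₁ := hfi.mul_e2pi t
  have hint₂ := hf'i.mul_e2pi t
  have hlim : Tendsto (fun u => f u * e2pi (t * u)) atTop (𝓝 0) := by
    have h0 := tendsto_zero_of_hasDerivAt_of_integrableOn_Ioi (a := 0) (fun u _ => hf u)
      hf'i.integrableOn hfi.integrableOn
    rw [tendsto_zero_iff_norm_tendsto_zero] at h0 ⊢
    simpa only [norm_mul, norm_e2pi, mul_one] using h0
  have hftc := integral_Ioi_of_hasDerivAt_of_tendsto' (a := b) (fun u _ => hderiv u)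
    (hint₂.add (hint₁.const_mul c)).integrableOn hlim
  rw [integral_add hint₂.integrableOn (hint₁.const_mul c).integrableOn, integral_const_mul]
    at hftc
  have hc : ‖c‖ = 2 * Real.pi * |t| := by simp [c, abs_of_pos Real.pi_pos]
  calc 2 * Real.pi * |t| * ‖∫ u in Ioi b, f u * e2pi (t * u)‖
      = ‖f b * e2pi (t * b) + ∫ u in Ioi b, f' u * e2pi (t * u)‖ := by
        rw [← hc, ← norm_mul, ← norm_neg]; congr 1; linear_combination -hftc
    _ ≤ ‖f b‖ + ∫ u in Ioi b, ‖f' u‖ := by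
        refine (norm_add_le _ _).trans (add_le_add (by simp [norm_e2pi]) ?_)
        refine (norm_integral_le_integral_norm _).trans_eq ?_
        simp only [norm_mul, norm_e2pi, mul_one]
    _ ≤ ‖f b‖ + ∫ u, ‖f' u‖ :=
        add_le_add_right (setIntegral_le_integral hf'i.norm (.of_forall fun _ => norm_nonneg _)) _

lemma norm_setIntegral_Iic_mul_e2pi_le (hf : ∀ u, HasDerivAt f (f' u) u) (hfi : Integrable f)
    (hf'i : Integrable f') (b t : ℝ) :
    2 * Real.pi * |t| * ‖∫ u in Iic b, f u * e2pi (t * u)‖ ≤ ‖f b‖ + ∫ u, ‖f' u‖ := by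
  have h := norm_setIntegral_Ioi_mul_e2pi_le (f := fun u => f (-u)) (f' := fun u => -f' (-u))
    (fun u => ((hf (-u)).scomp u (hasDerivAt_neg u)).congr_deriv (by simp)) hfi.comp_neg
    hf'i.comp_neg.neg (-b) (-t)
  rw [← integral_comp_neg_Iic] at h
  simpa only [neg_neg, neg_mul_neg, abs_neg, norm_neg, integral_neg_eq_self (fun u => ‖f' u‖)]
    using h

end HalfLine

lemma Real.abs_sign_le_one (r : ℝ) : |Real.sign r| ≤ 1 := by
  rcases Real.sign_apply_eq r with h | h | h <;> simp [h]

namespace SchwartzMap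

lemma exists_one_add_abs_pow_mul_norm_le (f : 𝓢(ℝ, ℂ)) (k : ℕ) :
    ∃ C, ∀ x, (1 + |x|) ^ k * ‖f x‖ ≤ C :=
  ⟨_, fun x => by
    simpa [norm_iteratedFDeriv_zero] using
      one_add_le_sup_seminorm_apply (𝕜 := ℝ) (m := (k, 0)) le_rfl le_rfl f x⟩

lemma exists_one_add_abs_mul_norm_integral_sign_le (Φ : 𝓢(ℝ, ℂ)) :
    ∃ K, ∀ t a, (1 + |t|) * ‖∫ u, (Real.sign u : ℂ) * Φ (u - a) * e2pi (t * u)‖ ≤ K := by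
  obtain ⟨B, hB⟩ := Φ.exists_one_add_abs_pow_mul_norm_le 0
  simp only [pow_zero, one_mul] at hB
  set D := ∫ u, ‖deriv Φ u‖
  refine ⟨(∫ u, ‖Φ u‖) + (B + D), fun t a => ?_⟩
  set f : ℝ → ℂ := fun u => Φ (u - a)
  have hf : ∀ u, HasDerivAt f (deriv Φ (u - a)) u := fun u =>
    (Φ.hasDerivAt (u - a)).comp_sub_const u a
  have hfi : Integrable f := Φ.integrable.comp_sub_right a
  have hf'i : Integrable fun u => deriv Φ (u - a) :=
    (derivCLM ℝ ℂ Φ).integrable.comp_sub_right a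
  have hD : ∫ u, ‖deriv Φ (u - a)‖ = D := integral_sub_right_eq_self (fun u => ‖deriv Φ u‖) a
  have hIoi := norm_setIntegral_Ioi_mul_e2pi_le hf hfi hf'i 0 t
  have hIic := norm_setIntegral_Iic_mul_e2pi_le hf hfi hf'i 0 t
  rw [hD] at hIoi hIic
  have hL1 : ‖∫ u, (Real.sign u : ℂ) * f u * e2pi (t * u)‖ ≤ ∫ u, ‖Φ u‖ := by
    rw [← integral_sub_right_eq_self (fun u => ‖Φ u‖) a]
    refine norm_integral_le_of_norm_le hfi.norm (.of_forall fun u => ?_)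
    simpa [norm_e2pi] using
      mul_le_of_le_one_left (norm_nonneg (f u)) (Real.abs_sign_le_one u)
  have hsplit := integral_sign_mul_eq_sub _ (hfi.mul_e2pi t)
  simp only [← mul_assoc] at hsplit
  have hdecay : |t| * ‖∫ u, (Real.sign u : ℂ) * f u * e2pi (t * u)‖ ≤ B + D := by
    have hf0 : ‖f 0‖ ≤ B := hB _
    rw [hsplit]
    calc |t| * ‖(∫ u in Ioi 0, f u * e2pi (t * u)) - ∫ u in Iic 0, f u * e2pi (t * u)‖
        ≤ |t| * (‖∫ u in Ioi 0, f u * e2pi (t * u)‖ + ‖∫ u in Iic 0, f u * e2pi (t * u)‖) := by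
          gcongr; exact norm_sub_le _ _
      _ ≤ Real.pi * |t| *
          (‖∫ u in Ioi 0, f u * e2pi (t * u)‖ + ‖∫ u in Iic 0, f u * e2pi (t * u)‖) := by
          gcongr; exact le_mul_of_one_le_left (abs_nonneg t) (by linarith [Real.pi_gt_three])
      _ ≤ B + D := by linarith
  rw [add_mul, one_mul]
  exact add_le_add hL1 hdecay

end SchwartzMap

section Weights

open ENNReal

lemma one_add_abs_le_mul_one_add_abs (a b : ℝ) : 1 + |b| ≤ (1 + |a|) * (1 + |a + b|) := by
  have h : |b| ≤ |a + b| + |a| := by simpa using abs_sub (a + b) a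
  nlinarith [abs_nonneg a, abs_nonneg (a + b)]

lemma inv_one_add_abs_mul_inv_pow_three_le (t₁ t₂ : ℝ) :
    (1 + |t₁|)⁻¹ * ((1 + |t₁ + t₂|) ^ 3)⁻¹ ≤ (1 + |t₂|)⁻¹ * ((1 + |t₁ + t₂|) ^ 2)⁻¹ := by
  rw [← mul_inv, ← mul_inv]
  apply inv_anti₀ (by positivity)
  calc (1 + |t₂|) * (1 + |t₁ + t₂|) ^ 2
      ≤ (1 + |t₁|) * (1 + |t₁ + t₂|) * (1 + |t₁ + t₂|) ^ 2 := by
        gcongr; exact one_add_abs_le_mul_one_add_abs t₁ t₂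
    _ = (1 + |t₁|) * (1 + |t₁ + t₂|) ^ 3 := by ring

lemma lintegral_inv_one_add_abs_rpow_lt_top {p : ℝ} (hp : 1 < p) :
    ∫⁻ s : ℝ, ENNReal.ofReal ((1 + |s|) ^ p)⁻¹ < ∞ := by
  refine (le_of_eq (lintegral_congr fun s => ?_)).trans_lt
    (finite_integral_one_add_norm (E := ℝ) (r := p) (by simpa using hp))
  rw [Real.norm_eq_abs, Real.rpow_neg (by positivity)]

lemma lintegral_inv_one_add_abs_mul_inv_pow_three_le (t₂ : ℝ) :
    ∫⁻ t₁, ENNReal.ofReal ((1 + |t₁|)⁻¹ * ((1 + |t₁ + t₂|) ^ 3)⁻¹) ≤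
      ENNReal.ofReal (1 + |t₂|)⁻¹ * ∫⁻ s, ENNReal.ofReal ((1 + |s|) ^ 2)⁻¹ := by
  calc ∫⁻ t₁, ENNReal.ofReal ((1 + |t₁|)⁻¹ * ((1 + |t₁ + t₂|) ^ 3)⁻¹)
      ≤ ∫⁻ t₁, ENNReal.ofReal (1 + |t₂|)⁻¹ * ENNReal.ofReal ((1 + |t₁ + t₂|) ^ 2)⁻¹ :=
        lintegral_mono fun t₁ => by
          rw [← ENNReal.ofReal_mul (by positivity)]
          exact ENNReal.ofReal_le_ofReal (inv_one_add_abs_mul_inv_pow_three_le t₁ t₂)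
    _ = ENNReal.ofReal (1 + |t₂|)⁻¹ * ∫⁻ s, ENNReal.ofReal ((1 + |s|) ^ 2)⁻¹ := by
        rw [lintegral_const_mul' _ _ ofReal_ne_top,
          lintegral_add_right_eq_self (fun s => ENNReal.ofReal ((1 + |s|) ^ 2)⁻¹) t₂]

lemma lintegral_const_mul_inv_one_add_abs_rpow {M : ℝ≥0∞} (hM : M ≠ ∞) {r : ℝ} (hr : 0 < r) :
    (∫⁻ t : ℝ, (M * ENNReal.ofReal (1 + |t|)⁻¹) ^ r) ^ (1 / r) =
      M * (∫⁻ t : ℝ, ENNReal.ofReal ((1 + |t|) ^ r)⁻¹) ^ (1 / r) := by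
  have hpow : ∀ t : ℝ, (M * ENNReal.ofReal (1 + |t|)⁻¹) ^ r =
      M ^ r * ENNReal.ofReal ((1 + |t|) ^ r)⁻¹ := fun t => by
    rw [ENNReal.mul_rpow_of_nonneg _ _ hr.le, ENNReal.ofReal_rpow_of_nonneg (by positivity) hr.le,
      Real.inv_rpow (by positivity)]
  simp_rw [hpow]
  rw [lintegral_const_mul' _ _ (ENNReal.rpow_ne_top_of_nonneg hr.le hM),
    ENNReal.mul_rpow_of_nonneg _ _ (by positivity), ← ENNReal.rpow_mul, mul_one_div_cancel hr.ne',
    ENNReal.rpow_one]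

theorem lintegral_iSup_mixedNorm_lt_top {F : ℝ → ℝ → ℝ → ℝ → ℝ → ℝ → ℂ} {m : ℝ → ℝ}
    (hm : Integrable m)
    (hF : ∀ x t₁ t₂ ξ₁ ξ₂ ν,
      ‖F x t₁ t₂ ξ₁ ξ₂ ν‖ ≤ m ν * ((1 + |t₁|)⁻¹ * ((1 + |t₁ + t₂|) ^ 3)⁻¹))
    {r : ℝ} (hr : 1 < r) :
    (∫⁻ ν : ℝ, ⨆ ξ₁ : ℝ, ⨆ ξ₂ : ℝ,
        (∫⁻ t₂ : ℝ,
          (∫⁻ t₁ : ℝ, ⨆ x : ℝ, (‖F x t₁ t₂ ξ₁ ξ₂ ν‖₊ : ℝ≥0∞)) ^ r) ^ (1 / r)) < ∞ := by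
  set I₂ := ∫⁻ s : ℝ, ENNReal.ofReal ((1 + |s|) ^ 2)⁻¹
  set Iᵣ := ∫⁻ s : ℝ, ENNReal.ofReal ((1 + |s|) ^ r)⁻¹
  have hI₂ : I₂ < ∞ := by
    simpa only [Real.rpow_two] using lintegral_inv_one_add_abs_rpow_lt_top one_lt_two
  have hIᵣ : Iᵣ < ∞ := lintegral_inv_one_add_abs_rpow_lt_top hr
  have hr0 : 0 < r := by linarith
  have hinner : ∀ ν ξ₁ ξ₂ t₂, ∫⁻ t₁, ⨆ x, (‖F x t₁ t₂ ξ₁ ξ₂ ν‖₊ : ℝ≥0∞) ≤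
      ENNReal.ofReal (m ν) * I₂ * ENNReal.ofReal (1 + |t₂|)⁻¹ := by
    intro ν ξ₁ ξ₂ t₂
    calc ∫⁻ t₁, ⨆ x, (‖F x t₁ t₂ ξ₁ ξ₂ ν‖₊ : ℝ≥0∞)
        ≤ ∫⁻ t₁, ENNReal.ofReal (m ν) *
            ENNReal.ofReal ((1 + |t₁|)⁻¹ * ((1 + |t₁ + t₂|) ^ 3)⁻¹) :=
          lintegral_mono fun t₁ => iSup_le fun x => by
            rw [← enorm_eq_nnnorm, ← ofReal_norm, ← ENNReal.ofReal_mul' (by positivity)]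
            exact ENNReal.ofReal_le_ofReal (hF x t₁ t₂ ξ₁ ξ₂ ν)
      _ ≤ ENNReal.ofReal (m ν) * (ENNReal.ofReal (1 + |t₂|)⁻¹ * I₂) := by
          rw [lintegral_const_mul' _ _ ofReal_ne_top]
          gcongr
          exact lintegral_inv_one_add_abs_mul_inv_pow_three_le t₂
      _ = ENNReal.ofReal (m ν) * I₂ * ENNReal.ofReal (1 + |t₂|)⁻¹ := by ring
  have hmiddle : ∀ ν ξ₁ ξ₂, (∫⁻ t₂, (∫⁻ t₁, ⨆ x, (‖F x t₁ t₂ ξ₁ ξ₂ ν‖₊ : ℝ≥0∞)) ^ r) ^ (1 / r) ≤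
      ENNReal.ofReal (m ν) * (I₂ * Iᵣ ^ (1 / r)) := by
    intro ν ξ₁ ξ₂
    set M := ENNReal.ofReal (m ν) * I₂
    have hM : M ≠ ∞ := ENNReal.mul_ne_top ofReal_ne_top hI₂.ne
    calc (∫⁻ t₂, (∫⁻ t₁, ⨆ x, (‖F x t₁ t₂ ξ₁ ξ₂ ν‖₊ : ℝ≥0∞)) ^ r) ^ (1 / r)
        ≤ (∫⁻ t₂, (M * ENNReal.ofReal (1 + |t₂|)⁻¹) ^ r) ^ (1 / r) := by
          gcongr with t₂; exact hinner ν ξ₁ ξ₂ t₂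
      _ = ENNReal.ofReal (m ν) * (I₂ * Iᵣ ^ (1 / r)) := by
          rw [lintegral_const_mul_inv_one_add_abs_rpow hM hr0, mul_assoc]
  calc (∫⁻ ν : ℝ, ⨆ ξ₁ : ℝ, ⨆ ξ₂ : ℝ,
        (∫⁻ t₂ : ℝ, (∫⁻ t₁ : ℝ, ⨆ x : ℝ, (‖F x t₁ t₂ ξ₁ ξ₂ ν‖₊ : ℝ≥0∞)) ^ r) ^ (1 / r))
      ≤ ∫⁻ ν, ENNReal.ofReal (m ν) * (I₂ * Iᵣ ^ (1 / r)) :=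
        lintegral_mono fun ν => iSup₂_le fun ξ₁ ξ₂ => hmiddle ν ξ₁ ξ₂
    _ = (∫⁻ ν, ENNReal.ofReal (m ν)) * (I₂ * Iᵣ ^ (1 / r)) :=
        lintegral_mul_const' _ _
          (ENNReal.mul_ne_top hI₂.ne (ENNReal.rpow_ne_top_of_nonneg (by positivity) hIᵣ.ne))
    _ < ∞ := ENNReal.mul_lt_top hm.lintegral_lt_top
        (ENNReal.mul_lt_top hI₂ (ENNReal.rpow_lt_top_of_nonneg (by positivity) hIᵣ.ne))

end Weights

theorem exists_norm_symbSTFT3_le (Φ : 𝓢(ℝ, ℂ)) :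
    ∃ C, ∀ x t₁ t₂ ξ₁ ξ₂ ν,
      ‖symbSTFT3 (fun X => Φ X.1 * Φ X.2.2 * Φ (X.2.1 - X.2.2))
        (fun X => -(Real.pi : ℂ) * Complex.I * (Real.sign (X.2.1 - X.2.2) : ℝ)) x t₁ t₂ ξ₁ ξ₂ ν‖ ≤
      C * ‖𝓕 Φ ν‖ * ((1 + |t₁|)⁻¹ * ((1 + |t₁ + t₂|) ^ 3)⁻¹) := by
  obtain ⟨K, hK⟩ := Φ.exists_one_add_abs_mul_norm_integral_sign_le
  obtain ⟨C, hC⟩ := (𝓕 Φ).exists_one_add_abs_pow_mul_norm_le 3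
  refine ⟨Real.pi * K * C, fun x t₁ t₂ ξ₁ ξ₂ ν => ?_⟩
  have hsign : ∫ u, -(Real.pi : ℂ) * Complex.I * (Real.sign u : ℝ) * Φ (u - (ξ₁ - ξ₂)) *
      e2pi (t₁ * u) = (-(Real.pi : ℂ) * Complex.I) *
        ∫ u, (Real.sign u : ℂ) * Φ (u - (ξ₁ - ξ₂)) * e2pi (t₁ * u) := by
    rw [← integral_const_mul]; congr 1 with u; ring
  have hK' := (le_mul_inv_iff₀ (by positivity)).2 ((mul_comm _ _).trans_le (hK t₁ (ξ₁ - ξ₂)))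
  have hC' := (le_mul_inv_iff₀ (by positivity)).2
    ((mul_comm _ _).trans_le (hC (-(t₁ + t₂))))
  rw [symbSTFT3_eq_mul_mul Φ Φ Φ fun u => -(Real.pi : ℂ) * Complex.I * (Real.sign u : ℝ), hsign,
    norm_mul, norm_mul, norm_mul, norm_integral_comp_sub_mul_e2pi,
    norm_integral_comp_sub_mul_e2pi, neg_neg]
  rw [abs_neg] at hC'
  have hπ : ‖-(Real.pi : ℂ) * Complex.I‖ = Real.pi := by simp [abs_of_pos Real.pi_pos]
  calc ‖𝓕 Φ ν‖ * (‖-(Real.pi : ℂ) * Complex.I‖ *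
        ‖∫ u, (Real.sign u : ℂ) * Φ (u - (ξ₁ - ξ₂)) * e2pi (t₁ * u)‖) * ‖𝓕 Φ (-(t₁ + t₂))‖
      ≤ ‖𝓕 Φ ν‖ * (Real.pi * (K * (1 + |t₁|)⁻¹)) * (C * ((1 + |t₁ + t₂|) ^ 3)⁻¹) := by
        rw [hπ]; gcongr
        exact mul_nonneg (norm_nonneg _) (mul_nonneg Real.pi_pos.le ((norm_nonneg _).trans hK'))
    _ = Real.pi * K * C * ‖𝓕 Φ ν‖ * ((1 + |t₁|)⁻¹ * ((1 + |t₁ + t₂|) ^ 3)⁻¹) := by ring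

theorem stmt14_general (ψ₁ : SchwartzMap ℝ ℝ)
    (ψ : ℝ → ℂ) (hψ : ψ = fun y => ((ψ₁ y - ψ₁ (-y) : ℝ) : ℂ))
    (Ψ : ℝ × ℝ × ℝ → ℂ) (hΨ : Ψ = fun X => ψ X.1 * ψ X.2.2 * ψ (X.2.1 - X.2.2))
    (σBH : ℝ × ℝ × ℝ → ℂ)
    (hσBH : σBH = fun X => -(Real.pi : ℂ) * Complex.I * (Real.sign (X.2.1 - X.2.2) : ℝ))
    (r : ℝ) (hr : 1 < r) :
    (∫⁻ ν : ℝ, ⨆ ξ₁ : ℝ, ⨆ ξ₂ : ℝ,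
        (∫⁻ t₂ : ℝ,
          (∫⁻ t₁ : ℝ, ⨆ x : ℝ, (‖symbSTFT3 Ψ σBH x t₁ t₂ ξ₁ ξ₂ ν‖₊ : ℝ≥0∞)) ^ r) ^ (1 / r))
      < ∞ := by
  obtain ⟨Φ, rfl⟩ : ∃ Φ : 𝓢(ℝ, ℂ), ⇑Φ = ψ :=
    ⟨postcompCLM (𝕜 := ℝ) Complex.ofRealCLM
      (ψ₁ - compCLMOfContinuousLinearEquiv ℝ (.neg ℝ) ψ₁), by ext y; simp [hψ]⟩
  subst hΨ hσBH
  obtain ⟨C, hC⟩ := exists_norm_symbSTFT3_le Φ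
  exact lintegral_iSup_mixedNorm_lt_top ((𝓕 Φ).integrable.norm.const_mul C) hC hr

/-- the symbol of the bilinear Hilbert transform lies in
`𝓜^{(∞,1,r);(∞,∞,1)}` for every `r > 1`. -/
theorem stmt14 (ψ₁ : SchwartzMap ℝ ℝ)
    (hpos : ∀ y, 0 ≤ ψ₁ y) (hle : ∀ y, ψ₁ y ≤ 1)
    (hsupp : tsupport (⇑ψ₁) ⊆ Set.Ioo 0 1)
    (ψ : ℝ → ℂ) (hψ : ψ = fun y => ((ψ₁ y - ψ₁ (-y) : ℝ) : ℂ))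
    (Ψ : ℝ × ℝ × ℝ → ℂ) (hΨ : Ψ = fun X => ψ X.1 * ψ X.2.2 * ψ (X.2.1 - X.2.2))
    (σBH : ℝ × ℝ × ℝ → ℂ)
    (hσBH : σBH = fun X => -(Real.pi : ℂ) * Complex.I * (Real.sign (X.2.1 - X.2.2) : ℝ))
    (r : ℝ) (hr : 1 < r) :
    (∫⁻ ν : ℝ, ⨆ ξ₁ : ℝ, ⨆ ξ₂ : ℝ,
        (∫⁻ t₂ : ℝ,
          (∫⁻ t₁ : ℝ, ⨆ x : ℝ, (‖symbSTFT3 Ψ σBH x t₁ t₂ ξ₁ ξ₂ ν‖₊ : ℝ≥0∞)) ^ r) ^ (1 / r))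
      < ∞ :=
  stmt14_general ψ₁ ψ hψ Ψ hΨ σBH hσBH r hr

end
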